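/- Let n = 2m and let f be a homogeneous degree-2 rotation symmetric Boolean function in n variables. If f is bent, then the monomial x₀x_m (and hence the full function f₀ = ⊕_{i=0}^{m-1} x_i x_{m+i}) appears in the algebraic normal form of f. -/

import Mathlib

/-!
If `a_m = 0`, every orbit sum `∑_j x_j x_{j+i}` that occurs has `i + i ≠ 0` in `ℤ/2m`, so it is a sum
of `2m` distinct products, and complementing all variables changes it by
`∑_j (x_j + x_{j+i} + 1) = 2 ∑_j x_j + 2m = 0`. Hence `f (x + 1) = f x`, and the substitution
`x ↦ x + 1` negates the Walsh coefficient of `f` at `e₀`, which is therefore `0 ≠ ±2^m`.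
-/

open Finset

theorem neg_one_pow_val_add_one (v : ZMod 2) :
    (-1 : ℤ) ^ (v + 1).val = -(-1 : ℤ) ^ v.val := by
  fin_cases v <;> decide

theorem sum_neg_one_pow_val_eq_zero {V : Type*} [AddGroup V] [Fintype V] {g : V → ZMod 2}
    (u : V) (hg : ∀ x, g (x + u) = g x + 1) : ∑ x, (-1 : ℤ) ^ (g x).val = 0 := by
  have hshift : ∑ x, (-1 : ℤ) ^ (g (x + u)).val = ∑ x, (-1 : ℤ) ^ (g x).val :=
    Fintype.sum_equiv (Equiv.addRight u) _ _ fun _ => rfl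
  simp only [hg, neg_one_pow_val_add_one, sum_neg_distrib] at hshift
  linarith

theorem walsh_eq_zero_of_add_one_invariant {ι : Type*} [Fintype ι] [DecidableEq ι]
    {f : (ι → ZMod 2) → ZMod 2} (hf : ∀ x, f (x + 1) = f x) {w : ι → ZMod 2}
    (hw : ∑ i, w i = 1) : ∑ x, (-1 : ℤ) ^ (f x + ∑ i, w i * x i).val = 0 := by
  refine sum_neg_one_pow_val_eq_zero 1 fun x => ?_
  simp only [hf, Pi.add_apply, Pi.one_apply, mul_add, mul_one, sum_add_distrib, hw, add_assoc]

section CyclicPairs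

variable {G : Type*} [AddCommGroup G] [Fintype G]

theorem sum_prod_image_pair_translates {R : Type*} [CommSemiring R] [DecidableEq G]
    {c : G} (hc : c + c ≠ 0) (x : G → R) :
    ∑ T ∈ univ.image (fun j : G => ({0, c} : Finset G).image (· + j)), ∏ t ∈ T, x t
      = ∑ j, x j * x (c + j) := by
  have hpair : ∀ j : G, ({0, c} : Finset G).image (· + j) = {j, c + j} := by
    intro j
    rw [image_insert, image_singleton, zero_add]
  have hc0 : c ≠ 0 := by rintro rfl; exact hc (add_zero 0)
  have hne : ∀ j : G, j ≠ c + j := fun j h => hc0 (by simpa using h)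
  have hinj : Function.Injective (fun j : G => ({0, c} : Finset G).image (· + j)) := by
    intro j j' h
    simp only [hpair] at h
    have hj : j ∈ ({j', c + j'} : Finset G) := h ▸ mem_insert_self _ _
    have hcj : c + j ∈ ({j', c + j'} : Finset G) := h ▸ mem_insert_of_mem (mem_singleton_self _)
    simp only [mem_insert, mem_singleton] at hj hcj
    rcases hj with hj | hj
    · exact hj
    · rcases hcj with hcj | hcj
      · exact absurd (by rw [hj, ← add_assoc] at hcj; simpa using hcj.symm) hc
      · exact add_left_cancel hcj
  rw [sum_image fun j _ j' _ h => hinj h]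
  exact sum_congr rfl fun j _ => by rw [hpair, prod_pair (hne j)]

theorem sum_mul_translate_add_one (hG : Even (Fintype.card G)) (c : G) (x : G → ZMod 2) :
    ∑ j, (x + 1) j * (x + 1) (c + j) = ∑ j, x j * x (c + j) := by
  have hexpand : ∀ j, (x + 1) j * (x + 1) (c + j) = x j * x (c + j) + (x j + x (c + j) + 1) :=
    fun j => by simp only [Pi.add_apply, Pi.one_apply]; ring
  have htranslate : ∑ j, x (c + j) = ∑ j, x j :=
    Fintype.sum_equiv (Equiv.addLeft c) _ _ fun _ => rfl
  have hcard : (Fintype.card G : ZMod 2) = 0 := (ZMod.natCast_eq_zero_iff_even).2 hG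
  rw [sum_congr rfl fun j _ => hexpand j, sum_add_distrib, sum_add_distrib, sum_add_distrib,
    htranslate, sum_const, card_univ, nsmul_one, hcard, CharTwo.add_self_eq_zero, add_zero,
    add_zero]

end CyclicPairs

theorem Fin.add_self_ne_zero {m : ℕ} [NeZero (2 * m)] {c : Fin (2 * m)} (h0 : c.val ≠ 0)
    (hm : c.val ≠ m) : c + c ≠ 0 := by
  intro h
  have h' := congrArg Fin.val h
  rw [Fin.val_add, Fin.val_zero] at h'
  rcases Nat.lt_or_ge (c.val + c.val) (2 * m) with hlt | hge
  · rw [Nat.mod_eq_of_lt hlt] at h'; omega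
  · rw [Nat.mod_eq_sub_mod hge, Nat.mod_eq_of_lt (by omega)] at h'; omega

theorem stmt11 (m : ℕ) (hm : 0 < m) (a : ℕ → ZMod 2)
    (f : (Fin (2*m) → ZMod 2) → ZMod 2)
    (hf : ∀ x, f x = ∑ i ∈ Finset.Icc 1 (2*m - 1), a i *
        ∑ T ∈ Finset.univ.image (fun j : Fin (2*m) =>
          ({⟨0, by omega⟩, ⟨i % (2*m), Nat.mod_lt _ (by omega)⟩} :
            Finset (Fin (2*m))).image (· + j)), ∏ t ∈ T, x t)
    (hbent : ∀ w : Fin (2*m) → ZMod 2,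
      (∑ x : Fin (2*m) → ZMod 2, (-1 : ℤ) ^ ((f x + ∑ i, w i * x i).val)) = 2 ^ m ∨
      (∑ x : Fin (2*m) → ZMod 2, (-1 : ℤ) ^ ((f x + ∑ i, w i * x i).val)) = -(2 ^ m)) :
    a m = 1 := by
  have : NeZero (2 * m) := ⟨by omega⟩
  by_contra ham
  replace ham : a m = 0 := by revert ham; generalize a m = v; revert v; decide
  have hcompl : ∀ x, f (x + 1) = f x := by
    intro x
    rw [hf, hf]
    refine sum_congr rfl fun i hi => ?_
    rcases eq_or_ne i m with rfl | him
    · rw [ham, zero_mul, zero_mul]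
    · have hi' := mem_Icc.1 hi
      have hival : i % (2 * m) = i := Nat.mod_eq_of_lt (by omega)
      have hc := Fin.add_self_ne_zero (m := m) (c := ⟨i % (2 * m), Nat.mod_lt _ (by omega)⟩)
        (by dsimp only; omega) (by dsimp only; omega)
      simp only [Fin.mk_zero', sum_prod_image_pair_translates hc]
      rw [sum_mul_translate_add_one (by simp)]
  have hwalsh := walsh_eq_zero_of_add_one_invariant hcompl (w := Pi.single 0 1)
    (Fintype.sum_pi_single' _ _)
  have hpow : (0 : ℤ) < 2 ^ m := by positivity
  rcases hbent (Pi.single 0 1) with h | h <;> rw [hwalsh] at h <;> linarith
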